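/- Let U ⊆ ℂⁿ be a bounded open connected set and g ∈ ℂ. For every ξ ∈ U ∩ 𝕌ⁿ and every ν ∈ ℤⁿ with ν ≥ 0, the rescaled Calogero–Sutherland Harish-Chandra coefficients converge to the normalized Toda Harish-Chandra coefficients: lim_{c→+∞} â^cs_ν(ξ;k^(c)) = Δ_U(ξ)·a_ν(ξ;g). -/

import Mathlib

open scoped BigOperators
open Finset Filter Topology

noncomputable section

namespace TodaBC

variable {n : ℕ}

/-- The bilinear pairing `⟨ξ,x⟩ = ∑_j ξ_j x_j` on `ℂⁿ`. -/
def pc (ξ x : Fin n → ℂ) : ℂ := ∑ j, ξ j * x j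

/-- Complexification of an integer vector. -/
def zc (ν : Fin n → ℤ) : Fin n → ℂ := fun j => (ν j : ℂ)

/-- Complexification of a real vector. -/
def cr (x : Fin n → ℝ) : Fin n → ℂ := fun j => (x j : ℂ)

/-- `ρ = (n, n-1, …, 1)` as a complex vector (0-indexed: `ρ_j = n - j`). -/
def rhoC (n : ℕ) : Fin n → ℂ := fun j => ((n - (j : ℕ) : ℕ) : ℂ)

/-- `ρ = (n, n-1, …, 1)` as a real vector. -/
def rhoR (n : ℕ) : Fin n → ℝ := fun j => ((n - (j : ℕ) : ℕ) : ℝ)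

/-- `⟨ν,ρ⟩` for an integer vector `ν`. -/
def rp (ν : Fin n → ℤ) : ℤ := ∑ j, ν j * ((n : ℤ) - ((j : ℕ) : ℤ))

/-- `ν ≥ 0` : all initial partial sums of `ν` are nonnegative. -/
def dominant (ν : Fin n → ℤ) : Prop := ∀ k : Fin n, 0 ≤ ∑ j ∈ Finset.Iic k, ν j

/-- The domain `𝕌ⁿ = {ξ ∈ ℂⁿ ∣ ⟨ν-2ξ,ν⟩ ≠ 0 for all ν > 0}`. -/
def Uset (n : ℕ) : Set (Fin n → ℂ) :=
  {ξ | ∀ ν : Fin n → ℤ, dominant ν → ν ≠ 0 → pc (zc ν - 2 • ξ) (zc ν) ≠ 0}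

/-- Standard basis vector of `ℤⁿ` with (0-based) index `k`. -/
def eZ (n : ℕ) (k : ℕ) : Fin n → ℤ := fun i => if (i : ℕ) = k then 1 else 0

/-- RHS of the Toda Harish-Chandra recurrence: `∑_{α ∈ S} a_α a_{ν-α}`. -/
def todaRHS (g : ℂ) (a : (Fin n → ℤ) → ℂ) (ν : Fin n → ℤ) : ℂ :=
  (∑ k ∈ Finset.range (n - 1), 2 * a (ν - (eZ n k - eZ n (k + 1))))
    + g * a (ν - eZ n (n - 1)) + (1 / 4) * a (ν - 2 • eZ n (n - 1))

/-- `a` is the family of Harish-Chandra coefficients `ν ↦ a_ν(ξ;g)`. -/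
def IsHC (g : ℂ) (ξ : Fin n → ℂ) (a : (Fin n → ℤ) → ℂ) : Prop :=
  a 0 = 1 ∧ (∀ ν, ¬ dominant ν → a ν = 0) ∧
    ∀ ν, dominant ν → ν ≠ 0 →
      a ν = (pc (zc ν - 2 • ξ) (zc ν))⁻¹ * todaRHS g a ν

/-- Term of the Harish-Chandra series: `a_ν e^{⟨ξ-ν,x⟩}`. -/
def hcTerm (a : (Fin n → ℤ) → ℂ) (ξ x : Fin n → ℂ) (ν : Fin n → ℤ) : ℂ :=
  a ν * Complex.exp (pc (ξ - zc ν) x)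

/-- The Toda + Morse potential `∑_{α ∈ S} a_α e^{-⟨α,x⟩}`. -/
def potential (n : ℕ) (g : ℂ) (x : Fin n → ℂ) : ℂ :=
  (∑ k ∈ Finset.range (n - 1), 2 * Complex.exp (- pc (zc (eZ n k - eZ n (k + 1))) x))
    + g * Complex.exp (- pc (zc (eZ n (n - 1))) x)
    + (1 / 4) * Complex.exp (- pc (zc (2 • eZ n (n - 1))) x)

/-- `∂²f/∂x_j²` evaluated at `x`. -/
def secondPartial (f : (Fin n → ℂ) → ℂ) (j : Fin n) (x : Fin n → ℂ) : ℂ :=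
  iteratedDeriv 2 (fun s => f (Function.update x j s)) (x j)

/-- `ℂⁿ_{reg,+}`. -/
def regPlus (n : ℕ) : Set (Fin n → ℂ) :=
  {ξ | (∀ j, ∀ m : ℤ, 0 < m → 2 * ξ j ≠ (m : ℂ)) ∧
    ∀ j k : Fin n, j < k → ∀ m : ℤ, 0 < m → ξ j + ξ k ≠ (m : ℂ) ∧ ξ j - ξ k ≠ (m : ℂ)}

/-- `ℂⁿ_{reg}`. -/
def regSet (n : ℕ) : Set (Fin n → ℂ) :=
  {ξ | (∀ j, ∀ m : ℤ, 2 * ξ j ≠ (m : ℂ)) ∧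
    ∀ j k : Fin n, j < k → ∀ m : ℤ, ξ j + ξ k ≠ (m : ℂ) ∧ ξ j - ξ k ≠ (m : ℂ)}

/-- `ℂⁿ_{reg,-}`. -/
def regMinus (n : ℕ) : Set (Fin n → ℂ) :=
  {ξ | (∀ j, ∀ m : ℤ, m ≤ 0 → 2 * ξ j ≠ (m : ℂ)) ∧
    ∀ j k : Fin n, j < k → ∀ m : ℤ, m ≤ 0 → ξ j + ξ k ≠ (m : ℂ) ∧ ξ j - ξ k ≠ (m : ℂ)}

/-- The condition `x_k - x_{k+1} ≥ R` for `k = 1,…,n` (with `x_{n+1} = 0`). -/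
def spaced (n : ℕ) (R : ℝ) (x : Fin n → ℝ) : Prop :=
  ∀ k : Fin n, (if h : (k : ℕ) + 1 < n then x ⟨(k : ℕ) + 1, h⟩ else 0) + R ≤ x k

/-- The Toda `c`-function `C(ξ;g)`. -/
def Cfun (g : ℂ) (ξ : Fin n → ℂ) : ℂ :=
  (∏ j, Complex.Gamma (2 * ξ j) / Complex.Gamma (1 / 2 + g + ξ j)) *
    ∏ j, ∏ k ∈ Finset.Ioi j, Complex.Gamma (ξ j + ξ k) * Complex.Gamma (ξ j - ξ k)

/-- Action of the signed permutation `(σ,ε)` on `ℂⁿ`: `(wξ)_j = ε_j ξ_{σ_j}`. -/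
def wAct (σ : Equiv.Perm (Fin n)) (ε : Fin n → Bool) (ξ : Fin n → ℂ) : Fin n → ℂ :=
  fun j => (if ε j then 1 else -1) * ξ (σ j)

/-- The hyperoctahedral Whittaker function `Φ_ξ(x;g) = ∑_{w ∈ W} C(wξ;g) φ_{wξ}(x;g)`,
built from an extension `F` of the fundamental Whittaker function. -/
def PhiOf (F : (Fin n → ℂ) → (Fin n → ℂ) → ℂ → ℂ) (g : ℂ) (ξ x : Fin n → ℂ) : ℂ :=
  ∑ σ : Equiv.Perm (Fin n), ∑ ε : Fin n → Bool,
    Cfun g (wAct σ ε ξ) * F (wAct σ ε ξ) x g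

/-- `F` is the holomorphic extension, to `ℂⁿ_{reg,+} × ℂⁿ × ℂ`, of the fundamental Whittaker
function attached to the coefficient family `a`. -/
def IsPhiExt (n : ℕ) (a : (Fin n → ℂ) → ℂ → (Fin n → ℤ) → ℂ)
    (F : (Fin n → ℂ) → (Fin n → ℂ) → ℂ → ℂ) : Prop :=
  DifferentiableOn ℂ (fun p : (Fin n → ℂ) × (Fin n → ℂ) × ℂ => F p.1 p.2.1 p.2.2)
      ((regPlus n) ×ˢ (Set.univ : Set (Fin n → ℂ)) ×ˢ (Set.univ : Set ℂ)) ∧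
    ∀ ξ ∈ Uset n ∩ regPlus n, ∀ x : Fin n → ℂ, ∀ g : ℂ,
      HasSum (fun ν : Fin n → ℤ => hcTerm (a ξ g) ξ x ν) (F ξ x g)

/-- Sign vector with value `+1` on `P`, `-1` on `M`, `0` elsewhere. -/
def es (P M : Finset (Fin n)) (j : Fin n) : ℂ :=
  if j ∈ P then 1 else if j ∈ M then -1 else 0

/-- The coefficient `V_{εJ}(ξ;g)` where `J = P ∪ M`, `ε = +1` on `P` and `-1` on `M`. -/
def Vco (g : ℂ) (ξ : Fin n → ℂ) (P M : Finset (Fin n)) : ℂ :=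
  (∏ j ∈ P ∪ M, (1 / 2 + g + es P M j * ξ j) / (2 * ξ j * (2 * ξ j + es P M j)))
    * (∏ j ∈ P ∪ M, ∏ k ∈ (P ∪ M)ᶜ, (ξ j ^ 2 - ξ k ^ 2)⁻¹)
    * ∏ j ∈ P ∪ M, ∏ j' ∈ (P ∪ M).filter (fun j' => j < j'),
        (es P M j * ξ j + es P M j' * ξ j')⁻¹ * (1 + es P M j * ξ j + es P M j' * ξ j')⁻¹

/-- The coefficient `U_{K,p}(ξ;g)`. -/
def Uco (g : ℂ) (ξ : Fin n → ℂ) (K : Finset (Fin n)) (p : ℕ) : ℂ :=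
  (-1 : ℂ) ^ (p * (p + 1) / 2) *
    ∑ P : Finset (Fin n), ∑ M : Finset (Fin n),
      if P ⊆ K ∧ M ⊆ K ∧ Disjoint P M ∧ P.card + M.card = p then
        (∏ i ∈ P ∪ M, (1 / 2 + g + es P M i * ξ i) / (2 * ξ i * (2 * ξ i + es P M i)))
          * (∏ i ∈ P ∪ M, ∏ k ∈ K \ (P ∪ M), (ξ i ^ 2 - ξ k ^ 2)⁻¹)
          * ∏ i ∈ P ∪ M, ∏ i' ∈ (P ∪ M).filter (fun i' => i < i'),
              (es P M i * ξ i + es P M i' * ξ i')⁻¹ *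
                (1 + es P M i * ξ i + es P M i' * ξ i')⁻¹
      else 0

/-- LHS of the dual difference equation of order `ℓ`, applied to a function `Φf` of the
spectral variable. -/
def diffLHS (g : ℂ) (ℓ : ℕ) (ξ : Fin n → ℂ) (Φf : (Fin n → ℂ) → ℂ) : ℂ :=
  ∑ P : Finset (Fin n), ∑ M : Finset (Fin n),
    if Disjoint P M ∧ P.card + M.card ≤ ℓ then
      Uco g ξ (P ∪ M)ᶜ (ℓ - (P.card + M.card)) * Vco g ξ P M * Φf (ξ + es P M)
    else 0

/-- The set of linear forms `ξ ↦ 2ξ_j`, `ξ ↦ ξ_j ± ξ_k` (`j < k`). -/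
def LinForms (n : ℕ) : Set ((Fin n → ℂ) → ℂ) :=
  {L | (∃ j, L = fun ξ => 2 * ξ j) ∨
    ∃ j k : Fin n, j < k ∧ ((L = fun ξ => ξ j + ξ k) ∨ L = fun ξ => ξ j - ξ k)}

/-- Exponential damping factor `e^{-c·l·⟨α,ρ⟩}`. -/
def damp (n : ℕ) (c : ℝ) (l : ℕ) (α : Fin n → ℤ) : ℂ :=
  Complex.exp (((-(c * (l : ℝ) * ((rp α : ℤ) : ℝ))) : ℝ) : ℂ)

/-- RHS of the (rescaled) Calogero–Sutherland Harish-Chandra recurrence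
`∑_{α ∈ R₊} ∑_{l ≥ 1} l e^{-c l ⟨α,ρ⟩} a^{cs}_α(k) a_{ν - lα}` (a finite sum since the
terms with `l > ⟨ν,ρ⟩` vanish). -/
def csRHS (k : ℂ × ℂ × ℂ) (c : ℝ) (a : (Fin n → ℤ) → ℂ) (ν : Fin n → ℤ) : ℂ :=
  ∑ l ∈ Finset.Icc 1 (rp ν).toNat, (l : ℂ) *
    ((∑ j : Fin n, damp n c l (eZ n (j : ℕ)) * (k.2.1 * (k.2.1 + 2 * k.2.2 - 1)) *
        a (ν - l • eZ n (j : ℕ)))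
      + (∑ j : Fin n, damp n c l (2 • eZ n (j : ℕ)) * (4 * k.2.2 * (k.2.2 - 1)) *
          a (ν - l • (2 • eZ n (j : ℕ))))
      + ∑ j : Fin n, ∑ j' ∈ Finset.Ioi j,
          (damp n c l (eZ n (j : ℕ) + eZ n (j' : ℕ)) * (2 * k.1 * (k.1 - 1)) *
              a (ν - l • (eZ n (j : ℕ) + eZ n (j' : ℕ)))
            + damp n c l (eZ n (j : ℕ) - eZ n (j' : ℕ)) * (2 * k.1 * (k.1 - 1)) *
                a (ν - l • (eZ n (j : ℕ) - eZ n (j' : ℕ)))))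

/-- `a` is the family of Calogero–Sutherland Harish-Chandra coefficients `ν ↦ a^{cs}_ν(ξ;k)`. -/
def IsHCcs (k : ℂ × ℂ × ℂ) (ξ : Fin n → ℂ) (a : (Fin n → ℤ) → ℂ) : Prop :=
  a 0 = 1 ∧ (∀ ν, ¬ dominant ν → a ν = 0) ∧
    ∀ ν, dominant ν → ν ≠ 0 → pc (zc ν - 2 • ξ) (zc ν) * a ν = csRHS k 0 a ν

/-- `a` is the family of rescaled coefficients `ν ↦ â^{cs}_ν(ξ;k)` (with damping `c` and
initial value `Δval`). -/
def IsHCcsResc (k : ℂ × ℂ × ℂ) (c : ℝ) (Δval : ℂ) (ξ : Fin n → ℂ)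
    (a : (Fin n → ℤ) → ℂ) : Prop :=
  a 0 = Δval ∧ (∀ ν, ¬ dominant ν → a ν = 0) ∧
    ∀ ν, dominant ν → ν ≠ 0 → pc (zc ν - 2 • ξ) (zc ν) * a ν = csRHS k c a ν

/-- The open Weyl chamber `𝔸ⁿ = {x ∈ ℝⁿ ∣ x₁ > x₂ > ⋯ > xₙ > 0}`. -/
def Achamber (n : ℕ) : Set (Fin n → ℝ) :=
  {x | (∀ j k : Fin n, j < k → x k < x j) ∧ ∀ j, 0 < x j}

/-- The coupling parameters `k^{(c)} = (k₀^{(c)}, 2g, k₂^{(c)})` with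
`k₀^{(c)}(k₀^{(c)}-1) = e^c`, `k₂^{(c)}(k₂^{(c)}-1) = e^{2c}/16`, `k₀^{(c)}, k₂^{(c)} > 0`. -/
def kParam (g : ℂ) (c : ℝ) : ℂ × ℂ × ℂ :=
  ((((1 + Real.sqrt (1 + 4 * Real.exp c)) / 2 : ℝ) : ℂ), 2 * g,
    (((1 + Real.sqrt (1 + Real.exp c ^ 2 / 4)) / 2 : ℝ) : ℂ))

/-- The Calogero–Sutherland `c`-function `C^{cs}(ξ;k)`. -/
def Ccs (k : ℂ × ℂ × ℂ) (ξ : Fin n → ℂ) : ℂ :=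
  (∏ j, Complex.Gamma (2 * ξ j) * Complex.Gamma (k.2.1 / 2 + ξ j) /
      (Complex.Gamma (k.2.1 + 2 * ξ j) * Complex.Gamma (k.2.1 / 2 + k.2.2 + ξ j))) *
    ∏ j, ∏ k' ∈ Finset.Ioi j,
      Complex.Gamma (ξ j + ξ k') * Complex.Gamma (ξ j - ξ k') /
        (Complex.Gamma (k.1 + ξ j + ξ k') * Complex.Gamma (k.1 + ξ j - ξ k'))

/-- The normalization constant `γ(k)`. -/
def gammaNorm (n : ℕ) (k : ℂ × ℂ × ℂ) : ℂ :=
  Complex.Gamma k.1 ^ (n * (n - 1)) *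
    (Complex.Gamma k.2.1 * Complex.Gamma (k.2.1 / 2 + k.2.2) /
      (Complex.Gamma (k.2.1 / 2) * Complex.Gamma (1 / 2 + k.2.1 / 2))) ^ n

/-! In the rescaled recurrence the `(α, l)` term carries the factor `e^{-c l ⟨α,ρ⟩} a^cs_α(k^(c))`,
where `a^cs_α(k^(c))` grows like `e^c` for `α = e_j, e_j ± e_k` and like `e^{2c}` for `α = 2e_j`.
Since `⟨α,ρ⟩ ≥ 1` with equality only for `e_j - e_{j+1}` and `e_n`, and `⟨2e_j,ρ⟩ = 2` only for
`j = n`, as `c → ∞` exactly the terms with `l = 1` and `α ∈ S` survive, with limiting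
coefficients `2`, `g` and `1/4`: the rescaled recurrence degenerates to the Toda recurrence.
Induction on `⟨ν,ρ⟩` then gives the limit. -/

lemma rp_add (a b : Fin n → ℤ) : rp (a + b) = rp a + rp b := by
  simp [rp, add_mul, Finset.sum_add_distrib]

lemma rp_sub (a b : Fin n → ℤ) : rp (a - b) = rp a - rp b := by
  simp [rp, sub_mul, Finset.sum_sub_distrib]

lemma rp_nsmul (l : ℕ) (a : Fin n → ℤ) : rp (l • a) = l * rp a := by
  simp [rp, Finset.mul_sum, mul_assoc]

lemma rp_eZ (j : Fin n) : rp (eZ n j) = n - j := by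
  rw [rp, Finset.sum_eq_single j (fun i _ hij => by simp [eZ, Fin.val_ne_of_ne hij]) (by simp)]
  simp [eZ]

lemma rp_sub_nsmul_lt (μ : Fin n → ℤ) {α : Fin n → ℤ} {l : ℕ} (hl : 1 ≤ l) (hα : 0 < rp α) :
    rp (μ - l • α) < rp μ := by
  have : 0 < (l : ℤ) * rp α := mul_pos (by omega) hα
  rw [rp_sub, rp_nsmul]
  omega

lemma rp_eq_sum_partialSums (ν : Fin n → ℤ) :
    rp ν = ∑ k : Fin n, ∑ j ∈ Finset.Iic k, ν j := by
  rw [Finset.sum_comm' (t' := Finset.univ) (s' := fun j => Finset.Ici j) (by simp)]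
  refine Finset.sum_congr rfl fun j _ => ?_
  rw [Finset.sum_const, Fin.card_Ici, nsmul_eq_mul, Nat.cast_sub j.isLt.le]
  ring

lemma eq_zero_of_partialSums_eq_zero {ν : Fin n → ℤ}
    (h : ∀ k : Fin n, ∑ j ∈ Finset.Iic k, ν j = 0) : ν = 0 := by
  funext k
  induction k using WellFoundedLT.induction with
  | _ k ih =>
    have hk := h k
    rwa [← Finset.Iio_insert, Finset.sum_insert (by simp),
      Finset.sum_eq_zero fun i hi => ih i (Finset.mem_Iio.mp hi), add_zero] at hk

lemma rp_nonneg {ν : Fin n → ℤ} (hν : dominant ν) : 0 ≤ rp ν := by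
  rw [rp_eq_sum_partialSums]
  exact Finset.sum_nonneg fun k _ => hν k

lemma rp_pos {ν : Fin n → ℤ} (hν : dominant ν) (h0 : ν ≠ 0) : 0 < rp ν := by
  refine (rp_nonneg hν).lt_of_ne fun h => h0 (eq_zero_of_partialSums_eq_zero fun k => ?_)
  rw [rp_eq_sum_partialSums] at h
  exact (Finset.sum_eq_zero_iff_of_nonneg fun k _ => hν k).mp h.symm k (Finset.mem_univ k)

lemma tendsto_exp_neg_mul_atTop {k : ℕ} (hk : 0 < k) :
    Tendsto (fun c : ℝ => (Real.exp (-(c * k)) : ℂ)) atTop (𝓝 0) := by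
  rw [← Complex.ofReal_zero, Filter.tendsto_ofReal_iff]
  exact Real.tendsto_exp_atBot.comp <| tendsto_neg_atTop_atBot.comp <|
    tendsto_id.atTop_mul_const (by exact_mod_cast hk)

lemma tendsto_exp_neg_mul_mul {f : ℝ → ℂ} {d N : ℕ} {L : ℂ}
    (hf : Tendsto (fun c : ℝ => (Real.exp (-(c * d)) : ℂ) * f c) atTop (𝓝 L)) (hdN : d ≤ N) :
    Tendsto (fun c : ℝ => (Real.exp (-(c * N)) : ℂ) * f c) atTop
      (𝓝 (if N = d then L else 0)) := by
  split_ifs with h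
  · exact h ▸ hf
  have hlim := (tendsto_exp_neg_mul_atTop (k := N - d) (by omega)).mul hf
  rw [zero_mul] at hlim
  refine hlim.congr fun c => ?_
  rw [← mul_assoc, ← Complex.ofReal_mul, ← Real.exp_add, Nat.cast_sub hdN]
  ring_nf

lemma damp_eq_exp {α : Fin n → ℤ} {m : ℕ} (hα : rp α = m) (c : ℝ) (l : ℕ) :
    damp n c l α = (Real.exp (-(c * (l * m : ℕ))) : ℂ) := by
  rw [damp, Complex.ofReal_exp, hα]
  push_cast
  ring_nf

lemma tendsto_damp_mul {α : Fin n → ℤ} {l m d : ℕ} {f : ℝ → ℂ} {L : ℂ} (hα : rp α = m)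
    (hl : 1 ≤ l) (hdm : d ≤ m)
    (hf : Tendsto (fun c : ℝ => (Real.exp (-(c * d)) : ℂ) * f c) atTop (𝓝 L)) :
    Tendsto (fun c : ℝ => damp n c l α * f c) atTop (𝓝 (if l * m = d then L else 0)) := by
  simp only [damp_eq_exp hα]
  exact tendsto_exp_neg_mul_mul hf (hdm.trans (Nat.le_mul_of_pos_left m hl))

lemma kParam_short_coupling (g : ℂ) (c : ℝ) :
    (kParam g c).2.1 * ((kParam g c).2.1 + 2 * (kParam g c).2.2 - 1)
      = 2 * g * (2 * g + Real.sqrt (1 + Real.exp c ^ 2 / 4)) := by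
  simp only [kParam]
  push_cast
  ring

lemma kParam_long_coupling (g : ℂ) (c : ℝ) :
    4 * (kParam g c).2.2 * ((kParam g c).2.2 - 1) = Real.exp c ^ 2 / 4 := by
  have h := Real.sq_sqrt (show (0 : ℝ) ≤ 1 + Real.exp c ^ 2 / 4 by positivity)
  have hre : 4 * ((1 + Real.sqrt (1 + Real.exp c ^ 2 / 4)) / 2) *
      ((1 + Real.sqrt (1 + Real.exp c ^ 2 / 4)) / 2 - 1) = Real.exp c ^ 2 / 4 := by
    linear_combination h
  simp only [kParam]
  exact_mod_cast hre

lemma kParam_middle_coupling (g : ℂ) (c : ℝ) :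
    2 * (kParam g c).1 * ((kParam g c).1 - 1) = 2 * Real.exp c := by
  have h := Real.sq_sqrt (show (0 : ℝ) ≤ 1 + 4 * Real.exp c by positivity)
  have hre : 2 * ((1 + Real.sqrt (1 + 4 * Real.exp c)) / 2) *
      ((1 + Real.sqrt (1 + 4 * Real.exp c)) / 2 - 1) = 2 * Real.exp c := by
    linear_combination h / 2
  simp only [kParam]
  exact_mod_cast hre

lemma tendsto_exp_neg_mul_kParam_short_coupling (g : ℂ) :
    Tendsto (fun c : ℝ => (Real.exp (-(c * (1 : ℕ))) : ℂ) *
      ((kParam g c).2.1 * ((kParam g c).2.1 + 2 * (kParam g c).2.2 - 1))) atTop (𝓝 g) := by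
  have hsqrt : ∀ c : ℝ, Real.exp (-c) * Real.sqrt (1 + Real.exp c ^ 2 / 4)
      = Real.sqrt (Real.exp (-c) ^ 2 + 1 / 4) := fun c => by
    rw [← Real.sqrt_sq (Real.exp_nonneg (-c)), ← Real.sqrt_mul (sq_nonneg _),
      Real.sqrt_sq (Real.exp_nonneg (-c)), mul_add, ← mul_div_assoc, ← mul_pow, ← Real.exp_add]
    simp
  have hdecay := tendsto_exp_neg_mul_atTop (k := 1) one_pos
  have hhalf : Tendsto (fun c : ℝ => (Real.sqrt (Real.exp (-c) ^ 2 + 1 / 4) : ℂ)) atTop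
      (𝓝 (1 / 2 : ℝ)) := by
    rw [Filter.tendsto_ofReal_iff, show (1 / 2 : ℝ) = Real.sqrt (0 ^ 2 + 1 / 4) by
      rw [show (0 : ℝ) ^ 2 + 1 / 4 = (1 / 2) ^ 2 by norm_num, Real.sqrt_sq (by norm_num)]]
    refine (Real.continuous_sqrt.tendsto _).comp
      (((Filter.tendsto_ofReal_iff.mp ?_).pow 2).add_const _)
    simpa using hdecay
  have hlim := (hdecay.const_mul (4 * g ^ 2)).add (hhalf.const_mul (2 * g))
  rw [mul_zero, zero_add, Complex.ofReal_div, Complex.ofReal_one, Complex.ofReal_ofNat,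
    mul_one_div, mul_div_cancel_left₀ g two_ne_zero] at hlim
  refine hlim.congr fun c => ?_
  rw [kParam_short_coupling, ← hsqrt]
  push_cast [mul_one]
  ring

lemma tendsto_exp_neg_mul_kParam_long_coupling (g : ℂ) :
    Tendsto (fun c : ℝ => (Real.exp (-(c * (2 : ℕ))) : ℂ) *
      (4 * (kParam g c).2.2 * ((kParam g c).2.2 - 1))) atTop (𝓝 (1 / 4)) := by
  refine tendsto_const_nhds.congr fun c => ?_
  have h : (1 / 4 : ℝ) = Real.exp (-(c * (2 : ℕ))) * (Real.exp c ^ 2 / 4) := by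
    rw [← Real.exp_nat_mul, mul_div_assoc', ← Real.exp_add]
    simp [mul_comm]
  have hc := congrArg Complex.ofReal h
  rw [kParam_long_coupling]
  push_cast at hc ⊢
  exact hc

lemma tendsto_exp_neg_mul_kParam_middle_coupling (g : ℂ) :
    Tendsto (fun c : ℝ => (Real.exp (-(c * (1 : ℕ))) : ℂ) *
      (2 * (kParam g c).1 * ((kParam g c).1 - 1))) atTop (𝓝 2) := by
  refine tendsto_const_nhds.congr fun c => ?_
  have h : (2 : ℝ) = Real.exp (-(c * (1 : ℕ))) * (2 * Real.exp c) := by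
    rw [mul_left_comm, ← Real.exp_add]
    simp
  rw [kParam_middle_coupling]
  exact_mod_cast congrArg Complex.ofReal h

/-- The `c → ∞` limit of the `l`-th summand of `csRHS (kParam g c) c a ν` when `a → b`. -/
def csRHSLimitTerm (g : ℂ) (b : (Fin n → ℤ) → ℂ) (ν : Fin n → ℤ) (l : ℕ) : ℂ :=
  (l : ℂ) *
    ((∑ j : Fin n, (if l * (n - (j : ℕ)) = 1 then g else 0) * b (ν - l • eZ n j))
      + (∑ j : Fin n, (if l * (2 * (n - (j : ℕ))) = 2 then (1 / 4 : ℂ) else 0) *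
          b (ν - l • (2 • eZ n j)))
      + ∑ j : Fin n, ∑ j' ∈ Finset.Ioi j,
          ((if l * (2 * n - (j : ℕ) - (j' : ℕ)) = 1 then (2 : ℂ) else 0) *
              b (ν - l • (eZ n j + eZ n j'))
            + (if l * ((j' : ℕ) - (j : ℕ)) = 1 then (2 : ℂ) else 0) *
                b (ν - l • (eZ n j - eZ n j'))))

lemma csRHSLimitTerm_of_ne_one (g : ℂ) (b : (Fin n → ℤ) → ℂ) (ν : Fin n → ℤ) {l : ℕ}
    (hl : l ≠ 1) : csRHSLimitTerm g b ν l = 0 := by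
  have h2 : ∀ m : ℕ, l * (2 * m) = 2 ↔ l * m = 1 := fun m => by
    rw [mul_left_comm]
    omega
  simp [csRHSLimitTerm, h2, mul_eq_one, hl]

lemma sum_ite_sub_eq_one {M : Type*} [AddCommMonoid M] (hn : 1 ≤ n) (f : ℕ → M) :
    ∑ j : Fin n, (if n - (j : ℕ) = 1 then f j else 0) = f (n - 1) := by
  rw [Finset.sum_eq_single ⟨n - 1, by omega⟩
    (fun j _ hj => if_neg fun h => hj (by ext; simp; omega)) (by simp)]
  simp [show n - (n - 1) = 1 by omega]

lemma sum_sum_Ioi_ite_sub_eq_one {M : Type*} [AddCommMonoid M] (f : ℕ → ℕ → M) :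
    ∑ j : Fin n, ∑ j' ∈ Finset.Ioi j, (if (j' : ℕ) - (j : ℕ) = 1 then f j j' else 0)
      = ∑ k ∈ Finset.range (n - 1), f k (k + 1) := by
  have hinner : ∀ j : Fin n, ∑ j' ∈ Finset.Ioi j, (if (j' : ℕ) - (j : ℕ) = 1 then f j j' else 0)
      = if (j : ℕ) + 1 < n then f j (j + 1) else 0 := fun j => by
    split_ifs with hj
    · rw [Finset.sum_eq_single ⟨j + 1, hj⟩ (fun j' hj' hne => if_neg fun h => hne (by
          ext; have := Finset.mem_Ioi.mp hj'; simp; omega)) (by simp [Fin.lt_def])]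
      simp
    · refine Finset.sum_eq_zero fun j' hj' => if_neg fun h => hj ?_
      have := Finset.mem_Ioi.mp hj'
      omega
  rw [Finset.sum_congr rfl fun j _ => hinner j,
    Fin.sum_univ_eq_sum_range (fun k => if k + 1 < n then f k (k + 1) else 0), ← Finset.sum_filter]
  congr 1
  ext k
  simp only [Finset.mem_filter, Finset.mem_range]
  omega

lemma csRHSLimitTerm_one (hn : 1 ≤ n) (g : ℂ) (b : (Fin n → ℤ) → ℂ) (ν : Fin n → ℤ) :
    csRHSLimitTerm g b ν 1 = todaRHS g b ν := by
  have h2 : ∀ m : ℕ, 2 * m = 2 ↔ m = 1 := by omega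
  have hplus : ∀ j : Fin n, ∀ j' ∈ Finset.Ioi j, ¬ 2 * n - (j : ℕ) - (j' : ℕ) = 1 :=
    fun j j' hj' => by
      have := Finset.mem_Ioi.mp hj'
      omega
  simp only [csRHSLimitTerm, Nat.cast_one, one_mul, one_smul, h2, ite_mul, zero_mul]
  rw [sum_ite_sub_eq_one hn (fun j => g * b (ν - eZ n j)),
    sum_ite_sub_eq_one hn (fun j => 1 / 4 * b (ν - 2 • eZ n j)),
    Finset.sum_congr rfl fun j _ => Finset.sum_congr rfl fun j' hj' => by
      rw [if_neg (hplus j j' hj'), zero_add],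
    sum_sum_Ioi_ite_sub_eq_one (fun k k' => 2 * b (ν - (eZ n k - eZ n k'))), todaRHS]
  ring

lemma sum_csRHSLimitTerm (hn : 1 ≤ n) (g : ℂ) (b : (Fin n → ℤ) → ℂ) (ν : Fin n → ℤ) {M : ℕ}
    (hM : 1 ≤ M) : ∑ l ∈ Finset.Icc 1 M, csRHSLimitTerm g b ν l = todaRHS g b ν := by
  rw [Finset.sum_eq_single 1 (fun l _ hl => csRHSLimitTerm_of_ne_one g b ν hl)
    (fun h => absurd (Finset.mem_Icc.mpr ⟨le_rfl, hM⟩) h), csRHSLimitTerm_one hn]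

lemma tendsto_csRHS_kParam (hn : 1 ≤ n) (g : ℂ) {a : ℝ → (Fin n → ℤ) → ℂ}
    {b : (Fin n → ℤ) → ℂ} {μ : Fin n → ℤ} (hμ : 0 < rp μ)
    (hab : ∀ κ, rp κ < rp μ → Tendsto (fun c => a c κ) atTop (𝓝 (b κ))) :
    Tendsto (fun c => csRHS (kParam g c) c (a c) μ) atTop (𝓝 (todaRHS g b μ)) := by
  rw [← sum_csRHSLimitTerm hn g b μ (M := (rp μ).toNat) (by omega)]
  refine tendsto_finsetSum _ fun l hl => ?_
  have hl1 : 1 ≤ l := (Finset.mem_Icc.mp hl).1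
  have hterm : ∀ {α : Fin n → ℤ} {m d : ℕ} {f : ℝ → ℂ} {L : ℂ}, rp α = m → 1 ≤ d → d ≤ m →
      Tendsto (fun c : ℝ => (Real.exp (-(c * d)) : ℂ) * f c) atTop (𝓝 L) →
      Tendsto (fun c => damp n c l α * f c * a c (μ - l • α)) atTop
        (𝓝 ((if l * m = d then L else 0) * b (μ - l • α))) := fun hα hd hdm hf =>
    (tendsto_damp_mul hα hl1 hdm hf).mul (hab _ (rp_sub_nsmul_lt μ hl1 (by omega)))
  refine Tendsto.const_mul _ <| ((tendsto_finsetSum _ fun j _ => ?_).add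
    (tendsto_finsetSum _ fun j _ => ?_)).add
    (tendsto_finsetSum _ fun j _ => tendsto_finsetSum _ fun j' hj' => (?_ : Tendsto _ _ _).add ?_)
  · exact hterm (m := n - j) (by rw [rp_eZ]; omega) le_rfl (by omega)
      (tendsto_exp_neg_mul_kParam_short_coupling g)
  · exact hterm (m := 2 * (n - j)) (by rw [rp_nsmul, rp_eZ]; omega) (by norm_num) (by omega)
      (tendsto_exp_neg_mul_kParam_long_coupling g)
  all_goals have := Finset.mem_Ioi.mp hj'
  · exact hterm (m := 2 * n - j - j') (by rw [rp_add, rp_eZ, rp_eZ]; omega) le_rfl (by omega)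
      (tendsto_exp_neg_mul_kParam_middle_coupling g)
  · exact hterm (m := j' - j) (by rw [rp_sub, rp_eZ, rp_eZ]; omega) le_rfl (by omega)
      (tendsto_exp_neg_mul_kParam_middle_coupling g)

lemma todaRHS_const_mul (g Δ : ℂ) (b : (Fin n → ℤ) → ℂ) (ν : Fin n → ℤ) :
    todaRHS g (fun κ => Δ * b κ) ν = Δ * todaRHS g b ν := by
  simp only [todaRHS, mul_add, Finset.mul_sum, mul_left_comm Δ]

lemma tendsto_nhds_of_forall_nonneg_eq {a : ℝ → ℂ} {x : ℂ} (h : ∀ c, 0 ≤ c → a c = x) :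
    Tendsto a atTop (𝓝 x) :=
  tendsto_const_nhds.congr' <| (eventually_ge_atTop 0).mono fun c hc => (h c hc).symm

theorem tendsto_rescaledHC (hn : 1 ≤ n) {g Δ : ℂ} {ξ : Fin n → ℂ} (hξ : ξ ∈ Uset n)
    {b : (Fin n → ℤ) → ℂ} (hb : IsHC g ξ b) {a : ℝ → (Fin n → ℤ) → ℂ}
    (ha : ∀ c : ℝ, 0 ≤ c → IsHCcsResc (kParam g c) c Δ ξ (a c)) (ν : Fin n → ℤ) :
    Tendsto (fun c => a c ν) atTop (𝓝 (Δ * b ν)) := by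
  have hnotDom : ∀ κ, ¬ dominant κ → Tendsto (fun c => a c κ) atTop (𝓝 (Δ * b κ)) :=
    fun κ hκ => by
      rw [hb.2.1 κ hκ, mul_zero]
      exact tendsto_nhds_of_forall_nonneg_eq fun c hc => (ha c hc).2.1 κ hκ
  suffices ∀ N : ℕ, ∀ ν, rp ν < N → Tendsto (fun c => a c ν) atTop (𝓝 (Δ * b ν)) from
    this ((rp ν).toNat + 1) ν (by omega)
  intro N
  induction N with
  | zero => exact fun ν hν => hnotDom ν fun hd => by have := rp_nonneg hd; omega
  | succ N ih =>
    intro ν hνN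
    by_cases hd : dominant ν
    swap
    · exact hnotDom ν hd
    by_cases h0 : ν = 0
    · rw [h0, hb.1, mul_one]
      exact tendsto_nhds_of_forall_nonneg_eq fun c hc => (ha c hc).1
    have hpc := hξ ν hd h0
    have hlim := tendsto_csRHS_kParam hn g (rp_pos hd h0) fun κ hκ => ih κ (by omega)
    have hval : Δ * b ν = (pc (zc ν - 2 • ξ) (zc ν))⁻¹ * todaRHS g (fun κ => Δ * b κ) ν := by
      rw [todaRHS_const_mul, hb.2.2 ν hd h0, mul_left_comm]
    rw [hval]
    refine (hlim.const_mul _).congr' <| (eventually_ge_atTop 0).mono fun c hc => ?_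
    rw [← (ha c hc).2.2 ν hd h0, inv_mul_cancel_left₀ hpc]

theorem statement16_general (n : ℕ) (hn : 1 ≤ n) (g : ℂ)
    (T : Finset (Fin n → ℤ))
    (ξ : Fin n → ℂ) (hξ : ξ ∈ Uset n)
    (aToda : (Fin n → ℤ) → ℂ) (ha : IsHC g ξ aToda)
    (ahat : ℝ → (Fin n → ℤ) → ℂ)
    (hahat : ∀ c : ℝ, 0 ≤ c →
      IsHCcsResc (kParam g c) c (∏ μ ∈ T, pc (zc μ - 2 • ξ) (zc μ)) ξ (ahat c))
    (ν : Fin n → ℤ) :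
    Filter.Tendsto (fun c : ℝ => ahat c ν) Filter.atTop
      (𝓝 ((∏ μ ∈ T, pc (zc μ - 2 • ξ) (zc μ)) * aToda ν)) :=
  tendsto_rescaledHC hn hξ ha hahat ν

/-- The rescaled Calogero–Sutherland Harish-Chandra coefficients converge to the normalized
Toda Harish-Chandra coefficients: `lim_{c→+∞} â^{cs}_ν(ξ;k^{(c)}) = Δ_U(ξ)·a_ν(ξ;g)`. -/
theorem statement16 (n : ℕ) (hn : 1 ≤ n)
    (U : Set (Fin n → ℂ)) (hUo : IsOpen U) (hUb : Bornology.IsBounded U)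
    (hUc : IsConnected U) (g : ℂ)
    (T : Finset (Fin n → ℤ))
    (hT : ∀ μ : Fin n → ℤ, μ ∈ T ↔ dominant μ ∧ μ ≠ 0 ∧
        ∃ ζ ∈ closure U, pc (zc μ - 2 • ζ) (zc μ) = 0)
    (ξ : Fin n → ℂ) (hξU : ξ ∈ U) (hξ : ξ ∈ Uset n)
    (aToda : (Fin n → ℤ) → ℂ) (ha : IsHC g ξ aToda)
    (ahat : ℝ → (Fin n → ℤ) → ℂ)
    (hahat : ∀ c : ℝ, 0 ≤ c →
      IsHCcsResc (kParam g c) c (∏ μ ∈ T, pc (zc μ - 2 • ξ) (zc μ)) ξ (ahat c))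
    (ν : Fin n → ℤ) (hν : dominant ν) :
    Filter.Tendsto (fun c : ℝ => ahat c ν) Filter.atTop
      (𝓝 ((∏ μ ∈ T, pc (zc μ - 2 • ξ) (zc μ)) * aToda ν)) :=
  statement16_general n hn g T ξ hξ aToda ha ahat hahat ν

end TodaBC
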